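/- Let M ⊂ ℝⁿ be a C² submanifold with positive reach τ > 0, and let x ∈ M. For any point y ∈ M with ‖y − x‖ < τ, the distance from y to the tangent space T_x M satisfies d(y, T_x M) ≤ ‖y − x‖² / (2τ). -/

import Mathlib

/-!
Let `ν` be a unit vector with `⟪v, ν⟫ ≤ 0` on the tangent cone of `M` at `x`. The heart of the
proof is that the open ball of radius `τ` about `x + τν` misses `M`; expanding
`‖(y - x) - τν‖ ≥ τ` then gives `2τ⟪y - x, ν⟫ ≤ ‖y - x‖²`, and `ν` is taken along the component
of `y - x` orthogonal to `T`.

For the ball: a point `x + tν` with small `t` is at distance almost `t` from `M`, as otherwise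
its nearest points would approach `x` from a direction at an acute angle to `ν`. Where the
nearest point is unique, the distance to `M` grows at unit rate along the ray away from it; a
maximisation over balls then lets one walk from `x + tν` to a point at distance `ρ < τ` from `M`
while moving only as far as the distance gained. That point is at least `ρ` from `x` and within
about `ρ - t` of `x + tν`, hence close to `x + ρν`.
-/

/-- `M` has reach at least `τ`: every point of the ambient space whose distance to `M`
is less than `τ` has a unique nearest point on `M` (Federer, 1959). -/
def HasReachGE {n : ℕ} (M : Set (EuclideanSpace ℝ (Fin n))) (τ : ℝ) : Prop :=
  ∀ y : EuclideanSpace ℝ (Fin n), Metric.infDist y M < τ →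
    ∃! p, p ∈ M ∧ dist y p = Metric.infDist y M

open Metric Filter Topology Set
open scoped RealInnerProductSpace

lemma tendsto_nearest_of_unique {X ι : Type*} [MetricSpace X] [ProperSpace X] {M : Set X}
    {l : Filter ι} (hM : IsClosed M) {z q : ι → X} {z₀ p : X} (hz : Tendsto z l (𝓝 z₀))
    (hq : ∀ i, q i ∈ M ∧ dist (z i) (q i) = infDist (z i) M)
    (hp : ∀ a ∈ M, dist z₀ a = infDist z₀ M → a = p) : Tendsto q l (𝓝 p) := by
  rw [tendsto_iff_ultrafilter]
  intro U hU
  have hzU := hz.mono_left hU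
  have hbdd : ∀ᶠ i in (U : Filter ι), q i ∈ closedBall z₀ (infDist z₀ M + 2) := by
    filter_upwards [hzU (closedBall_mem_nhds z₀ one_pos)] with i (hi : dist (z i) z₀ ≤ 1)
    rw [mem_closedBall]
    have := infDist_le_infDist_add_dist (s := M) (x := z i) (y := z₀)
    linarith [dist_triangle (q i) (z i) z₀, dist_comm (q i) (z i), (hq i).2]
  obtain ⟨a, -, ha⟩ := (isCompact_closedBall _ _).ultrafilter_le_nhds (U.map q)
    (by rwa [Ultrafilter.coe_map, le_principal_iff])
  have haM : a ∈ M := hM.mem_of_tendsto ha (.of_forall fun i => (hq i).1)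
  have hdist : Tendsto (fun i => dist (z i) (q i)) U (𝓝 (infDist z₀ M)) := by
    simp only [(hq _).2]
    exact ((continuous_infDist_pt M).tendsto z₀).comp hzU
  rwa [← hp a haM (tendsto_nhds_unique (hzU.dist ha) hdist)]

variable {E : Type*} [NormedAddCommGroup E] [InnerProductSpace ℝ E]

lemma norm_smul_of_norm_eq_one {ν : E} (hν : ‖ν‖ = 1) {t : ℝ} (ht : 0 ≤ t) : ‖t • ν‖ = t := by
  rw [norm_smul, hν, mul_one, Real.norm_of_nonneg ht]

lemma mul_norm_le_inner_of_norm_sub_smul_le {D ν : E} {t c : ℝ} (hν : ‖ν‖ = 1) (ht : 0 < t)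
    (hc : c ≤ 1) (hD : ‖D - t • ν‖ ≤ c * t) : (1 - c) / 2 * ‖D‖ ≤ ⟪D, ν⟫ := by
  have hexp : ‖D - t • ν‖ ^ 2 = ‖D‖ ^ 2 - 2 * t * ⟪D, ν⟫ + t ^ 2 := by
    rw [norm_sub_sq_real, real_inner_smul_right, norm_smul_of_norm_eq_one hν ht.le]; ring
  have hsq : ‖D - t • ν‖ ^ 2 ≤ (c * t) ^ 2 := pow_le_pow_left₀ (norm_nonneg _) hD 2
  have hnorm : ‖D‖ ≤ (1 + c) * t := by
    have := norm_le_norm_sub_add D (t • ν)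
    rw [norm_smul_of_norm_eq_one hν ht.le] at this
    linarith
  have : (1 - c) * t * ‖D‖ ≤ (1 - c) * t * ((1 + c) * t) :=
    mul_le_mul_of_nonneg_left hnorm (mul_nonneg (sub_nonneg.2 hc) ht.le)
  nlinarith [sq_nonneg ‖D‖]

-- `ζ` lies outside the ball of radius `ρ` about `0` but inside the ball of radius `ρ - d` about
-- `tν`; this lens shrinks to the point `ρν` as `d → t`.
lemma mul_norm_sub_smul_sq_le {ζ ν : E} {t d ρ : ℝ} (hν : ‖ν‖ = 1) (hd : 0 ≤ d) (hdt : d ≤ t)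
    (htρ : t ≤ ρ) (hζt : ‖ζ - t • ν‖ ≤ ρ - d) (hρζ : ρ ≤ ‖ζ‖) :
    t * ‖ζ - ρ • ν‖ ^ 2 ≤ 2 * ρ ^ 2 * (t - d) := by
  have ht : 0 ≤ t := hd.trans hdt
  have hρ : 0 ≤ ρ := ht.trans htρ
  have hexp : ∀ s, 0 ≤ s → ‖ζ - s • ν‖ ^ 2 = ‖ζ‖ ^ 2 - 2 * s * ⟪ζ, ν⟫ + s ^ 2 := fun s hs => by
    rw [norm_sub_sq_real, real_inner_smul_right, norm_smul_of_norm_eq_one hν hs]; ring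
  have hsq : ‖ζ - t • ν‖ ^ 2 ≤ (ρ - d) ^ 2 := pow_le_pow_left₀ (norm_nonneg _) hζt 2
  rw [hexp t ht] at hsq
  rw [hexp ρ hρ]
  have h1 : (t - ρ) * ‖ζ‖ ^ 2 ≤ (t - ρ) * ρ ^ 2 :=
    mul_le_mul_of_nonpos_left (pow_le_pow_left₀ hρ hρζ 2) (by linarith)
  have h2 := mul_le_mul_of_nonneg_left hsq hρ
  nlinarith [mul_nonneg hρ (mul_nonneg (sub_nonneg.2 hdt) (add_nonneg ht hd))]

variable [ProperSpace E] {M : Set E}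

lemma eventually_exists_dist_eq_add_mul_le_infDist (hM : IsClosed M) {z : E}
    (hz : 0 < infDist z M) (huniq : ∃! p, p ∈ M ∧ dist z p = infDist z M) {c : ℝ}
    (hc₀ : 0 ≤ c) (hc : c < 1) :
    ∀ᶠ h in 𝓝[>] 0, ∃ z', dist z' z = h ∧ infDist z M + c * h ≤ infDist z' M := by
  obtain ⟨p, ⟨hpM, hzp⟩, hp⟩ := huniq
  set r := infDist z M
  set u := r⁻¹ • (z - p)
  have hzp' : ‖z - p‖ = r := by rw [← dist_eq_norm, hzp]
  have hu : ‖u‖ = 1 := by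
    rw [norm_smul, norm_inv, hzp', Real.norm_of_nonneg hz.le, inv_mul_cancel₀ hz.ne']
  have hzpu : ⟪z - p, u⟫ = r := by
    rw [real_inner_smul_right, real_inner_self_eq_norm_sq, hzp']; field_simp
  choose q hqM hq using fun h : ℝ => hM.exists_infDist_eq_dist ⟨p, hpM⟩ (z + h • u)
  have hqp : Tendsto q (𝓝[>] 0) (𝓝 p) := by
    refine tendsto_nearest_of_unique hM (z := fun h => z + h • u) ?_
      (fun h => ⟨hqM h, (hq h).symm⟩) fun a ha had => hp a ⟨ha, had⟩
    exact tendsto_nhdsWithin_of_tendsto_nhds (Continuous.tendsto' (by fun_prop) 0 _ (by simp))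
  filter_upwards [self_mem_nhdsWithin, hqp (ball_mem_nhds p (mul_pos (sub_pos.2 hc) hz))]
    with h (hh : 0 < h) (hqh : dist (q h) p < (1 - c) * r)
  refine ⟨z + h • u, ?_, ?_⟩
  · rw [dist_eq_norm, add_sub_cancel_left, norm_smul_of_norm_eq_one hu hh.le]
  have hzq : r ≤ ‖z - q h‖ := by rw [← dist_eq_norm]; exact infDist_le_dist_of_mem (hqM h)
  have hinner : c * r ≤ ⟪z - q h, u⟫ := by
    have hpq : ⟪p - q h, u⟫ ≥ -‖p - q h‖ := by
      simpa [hu] using neg_le_of_abs_le (abs_real_inner_le_norm (p - q h) u)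
    rw [show z - q h = (z - p) + (p - q h) by abel, inner_add_left, hzpu]
    rw [← dist_eq_norm, dist_comm] at hpq
    nlinarith
  have hsq : (r + c * h) ^ 2 ≤ infDist (z + h • u) M ^ 2 := by
    rw [hq, dist_eq_norm, show z + h • u - q h = (z - q h) + h • u by abel, norm_add_sq_real,
      real_inner_smul_right, norm_smul_of_norm_eq_one hu hh.le]
    nlinarith [pow_le_pow_left₀ hz.le hzq 2, mul_le_mul_of_nonneg_left hinner hh.le,
      mul_le_mul_of_nonneg_right (pow_le_one₀ hc₀ hc.le : c ^ 2 ≤ 1) (sq_nonneg h)]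
  exact (pow_le_pow_iff_left₀ (by positivity) infDist_nonneg two_ne_zero).1 hsq

lemma exists_dist_le_add_mul_le_infDist (hM : IsClosed M) {τ : ℝ}
    (hreach : ∀ z, infDist z M < τ → ∃! p, p ∈ M ∧ dist z p = infDist z M) {z₀ : E}
    (hz₀ : 0 < infDist z₀ M) {L : ℝ} (hL : 0 ≤ L) (hτ : infDist z₀ M + L < τ) {c : ℝ}
    (hc₀ : 0 < c) (hc : c < 1) :
    ∃ z, dist z z₀ ≤ L ∧ infDist z₀ M + c * L ≤ infDist z M := by
  set K := closedBall z₀ L ∩ {z | infDist z₀ M + c * dist z z₀ ≤ infDist z M}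
  have hK : IsCompact K := (isCompact_closedBall z₀ L).inter_right
    (isClosed_le (by fun_prop) (continuous_infDist_pt M))
  obtain ⟨Z, ⟨hZL : dist Z z₀ ≤ L, hZ : infDist z₀ M + c * dist Z z₀ ≤ infDist Z M⟩, hZmax⟩ :=
    hK.exists_isMaxOn ⟨z₀, mem_closedBall_self hL, by simp⟩ (continuous_infDist_pt M).continuousOn
  refine ⟨Z, hZL, ?_⟩
  -- A maximiser strictly inside the ball could still be pushed further away from `M`.
  suffices L ≤ dist Z z₀ by nlinarith
  by_contra! hlt
  have hZpos : 0 < infDist Z M := by nlinarith [dist_nonneg (x := Z) (y := z₀)]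
  have hZτ : infDist Z M < τ :=
    (infDist_le_infDist_add_dist (y := z₀)).trans_lt (by linarith)
  obtain ⟨h, ⟨z', hz'Z, hz'⟩, hh, hhL⟩ :=
    ((eventually_exists_dist_eq_add_mul_le_infDist hM hZpos (hreach Z hZτ) hc₀.le hc).and
      (Ioo_mem_nhdsGT (sub_pos.2 hlt))).exists
  have hz'z₀ : dist z' z₀ ≤ h + dist Z z₀ := hz'Z ▸ dist_triangle z' Z z₀
  have hz'K : z' ∈ K := by
    refine ⟨mem_closedBall.2 (by linarith), ?_⟩
    show infDist z₀ M + c * dist z' z₀ ≤ infDist z' M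
    nlinarith [mul_le_mul_of_nonneg_left hz'z₀ hc₀.le]
  have hmax : infDist z' M ≤ infDist Z M := hZmax hz'K
  linarith [mul_pos hc₀ hh]

lemma exists_dist_le_add_le_infDist (hM : IsClosed M) {τ : ℝ}
    (hreach : ∀ z, infDist z M < τ → ∃! p, p ∈ M ∧ dist z p = infDist z M) {z₀ : E}
    (hz₀ : 0 < infDist z₀ M) {L : ℝ} (hL : 0 ≤ L) (hτ : infDist z₀ M + L < τ) :
    ∃ z, dist z z₀ ≤ L ∧ infDist z₀ M + L ≤ infDist z M := by
  obtain ⟨Z, hZL, hZmax⟩ := (isCompact_closedBall z₀ L).exists_isMaxOn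
    ⟨z₀, mem_closedBall_self hL⟩ (continuous_infDist_pt M).continuousOn
  refine ⟨Z, hZL, ?_⟩
  have hbound : ∀ c ∈ Ioo (0 : ℝ) 1, infDist z₀ M + c * L ≤ infDist Z M := fun c hc => by
    obtain ⟨z, hzL, hz⟩ := exists_dist_le_add_mul_le_infDist hM hreach hz₀ hL hτ hc.1 hc.2
    exact hz.trans (hZmax hzL)
  have hlim : Tendsto (fun c => infDist z₀ M + c * L) (𝓝[<] 1) (𝓝 (infDist z₀ M + L)) :=
    tendsto_nhdsWithin_of_tendsto_nhds (Continuous.tendsto' (by fun_prop) 1 _ (by simp))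
  exact le_of_tendsto hlim (eventually_of_mem (Ioo_mem_nhdsLT one_pos) hbound)

lemma exists_norm_eq_one_mem_tangentConeAt_le_inner {ι : Type*} {l : Filter ι} [l.NeBot]
    {p : ι → E} {x ν : E} {a : ℝ} (hp : Tendsto p l (𝓝 x)) (hpM : ∀ᶠ i in l, p i ∈ M)
    (ha : ∀ᶠ i in l, p i ≠ x ∧ a * ‖p i - x‖ ≤ ⟪p i - x, ν⟫) :
    ∃ V ∈ tangentConeAt ℝ M x, ‖V‖ = 1 ∧ a ≤ ⟪V, ν⟫ := by
  set U := Ultrafilter.of l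
  have hUl : (U : Filter ι) ≤ l := Ultrafilter.of_le l
  set e := fun i => ‖p i - x‖⁻¹ • (p i - x)
  have hpos : ∀ᶠ i in (U : Filter ι), 0 < ‖p i - x‖ ∧ a * ‖p i - x‖ ≤ ⟪p i - x, ν⟫ :=
    Eventually.filter_mono hUl <| ha.mono fun i hi => ⟨norm_pos_iff.2 (sub_ne_zero.2 hi.1), hi.2⟩
  obtain ⟨V, hV, hUV⟩ := (isCompact_sphere (0 : E) 1).ultrafilter_le_nhds (U.map e) <| by
    rw [Ultrafilter.coe_map, le_principal_iff, mem_map]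
    filter_upwards [hpos] with i hi
    simp [e, norm_smul, inv_mul_cancel₀ hi.1.ne']
  replace hUV : Tendsto e U (𝓝 V) := by rwa [Tendsto, ← Ultrafilter.coe_map]
  refine ⟨V, ?_, by simpa using hV, ?_⟩
  · refine mem_tangentConeAt_of_seq (U : Filter ι) (fun i => ‖p i - x‖⁻¹) (fun i => p i - x)
      ?_ ?_ hUV
    · simpa using (hp.mono_left hUl).sub_const x
    · exact Eventually.filter_mono hUl (hpM.mono fun i hi => by simpa using hi)
  · refine ge_of_tendsto (hUV.inner tendsto_const_nhds) ?_
    filter_upwards [hpos] with i hi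
    rw [real_inner_smul_left, le_inv_mul_iff₀ hi.1, mul_comm]
    exact hi.2

lemma eventually_mul_le_infDist_add_smul (hM : IsClosed M) {x ν : E} (hx : x ∈ M)
    (hν : ‖ν‖ = 1) (hnormal : ∀ v ∈ tangentConeAt ℝ M x, ⟪v, ν⟫ ≤ 0) {c : ℝ} (hc : c < 1) :
    ∀ᶠ t in 𝓝[>] 0, c * t ≤ infDist (x + t • ν) M := by
  by_contra hfreq
  simp only [not_eventually, not_le] at hfreq
  set l := 𝓝[>] (0 : ℝ) ⊓ 𝓟 {t | infDist (x + t • ν) M < c * t}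
  have : l.NeBot := frequently_iff_neBot.1 hfreq
  choose q hqM hq using fun t : ℝ => hM.exists_infDist_eq_dist ⟨x, hx⟩ (x + t • ν)
  have hnear : ∀ᶠ t in l, 0 < t ∧ ‖(q t - x) - t • ν‖ < c * t := by
    filter_upwards [inf_le_left (a := 𝓝[>] (0 : ℝ)) self_mem_nhdsWithin,
      inf_le_right (b := 𝓟 {t | infDist (x + t • ν) M < c * t}) (mem_principal_self _)]
      with t (ht : 0 < t) (hlt : infDist (x + t • ν) M < c * t)
    refine ⟨ht, ?_⟩
    rwa [hq, dist_comm, dist_eq_norm, ← sub_sub] at hlt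
  have hqx : Tendsto q l (𝓝 x) := by
    rw [tendsto_iff_norm_sub_tendsto_zero]
    have hlim : Tendsto (fun t => (1 + c) * t) l (𝓝 0) :=
      (Continuous.tendsto' (by fun_prop) 0 _ (by simp)).mono_left
        (inf_le_left.trans nhdsWithin_le_nhds)
    refine squeeze_zero' (.of_forall fun t => norm_nonneg _) ?_ hlim
    filter_upwards [hnear] with t ht
    have := norm_le_norm_sub_add (q t - x) (t • ν)
    rw [norm_smul_of_norm_eq_one hν ht.1.le] at this
    linarith [ht.2]
  obtain ⟨V, hVT, -, hV⟩ := exists_norm_eq_one_mem_tangentConeAt_le_inner (M := M)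
    (a := (1 - c) / 2) hqx (.of_forall hqM) <| hnear.mono fun t ht => by
      refine ⟨fun hqt => ?_, mul_norm_le_inner_of_norm_sub_smul_le hν ht.1 hc.le ht.2.le⟩
      rw [hqt, sub_self, zero_sub, norm_neg, norm_smul_of_norm_eq_one hν ht.1.le] at ht
      nlinarith [ht.2]
  linarith [hnormal V hVT]

lemma le_infDist_add_smul_of_lt (hM : IsClosed M) {τ : ℝ}
    (hreach : ∀ z, infDist z M < τ → ∃! p, p ∈ M ∧ dist z p = infDist z M) {x ν : E}
    (hx : x ∈ M) (hν : ‖ν‖ = 1) (hnormal : ∀ v ∈ tangentConeAt ℝ M x, ⟪v, ν⟫ ≤ 0) {ρ : ℝ}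
    (hρ₀ : 0 ≤ ρ) (hρ : ρ < τ) : ρ ≤ infDist (x + ρ • ν) M := by
  rcases hρ₀.eq_or_lt with rfl | hρ₀
  · exact infDist_nonneg
  by_contra! hlt
  set g := ρ - infDist (x + ρ • ν) M
  have hg : 0 < g := sub_pos.2 hlt
  have hdeficit : ∀ c ∈ Ioo (0 : ℝ) 1, g ^ 2 ≤ 2 * ρ ^ 2 * (1 - c) := by
    intro c hc
    obtain ⟨t, hct, ht, htρ⟩ :=
      ((eventually_mul_le_infDist_add_smul hM hx hν hnormal hc.2).and (Ioc_mem_nhdsGT hρ₀)).exists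
    set d₀ := infDist (x + t • ν) M
    have hd₀t : d₀ ≤ t := (infDist_le_dist_of_mem hx).trans_eq <| by
      rw [dist_eq_norm, add_sub_cancel_left, norm_smul_of_norm_eq_one hν ht.le]
    have hd₀ : 0 < d₀ := (mul_pos hc.1 ht).trans_le hct
    obtain ⟨zb, hzb, hρzb⟩ :=
      exists_dist_le_add_le_infDist hM hreach hd₀ (L := ρ - d₀) (by linarith) (by linarith)
    rw [add_sub_cancel] at hρzb
    have hlens := mul_norm_sub_smul_sq_le (ζ := zb - x) hν hd₀.le hd₀t htρ
      (by rwa [sub_sub, ← dist_eq_norm])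
      (by rw [← dist_eq_norm]; exact hρzb.trans (infDist_le_dist_of_mem hx))
    have hgzb : g ≤ ‖zb - x - ρ • ν‖ := by
      have := infDist_le_infDist_add_dist (s := M) (x := zb) (y := x + ρ • ν)
      rw [dist_eq_norm, ← sub_sub] at this
      linarith
    have : t * g ^ 2 ≤ t * (2 * ρ ^ 2 * (1 - c)) := by
      nlinarith [pow_le_pow_left₀ hg.le hgzb 2]
    exact le_of_mul_le_mul_left this ht
  have hc : 1 - g ^ 2 / (4 * ρ ^ 2) ∈ Ioo (0 : ℝ) 1 := by
    have hgρ : g ≤ ρ := sub_le_self _ infDist_nonneg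
    constructor
    · rw [sub_pos, div_lt_one (by positivity)]; nlinarith
    · have : 0 < g ^ 2 / (4 * ρ ^ 2) := by positivity
      linarith
  have hhalf : 2 * ρ ^ 2 * (1 - (1 - g ^ 2 / (4 * ρ ^ 2))) = g ^ 2 / 2 := by
    field_simp; ring
  linarith [hdeficit _ hc, pow_pos hg 2]

lemma two_mul_inner_le_sq_norm_of_norm_eq_one (hM : IsClosed M) {τ : ℝ} (hτ : 0 < τ)
    (hreach : ∀ z, infDist z M < τ → ∃! p, p ∈ M ∧ dist z p = infDist z M) {x ν y : E}
    (hx : x ∈ M) (hν : ‖ν‖ = 1) (hnormal : ∀ v ∈ tangentConeAt ℝ M x, ⟪v, ν⟫ ≤ 0) (hy : y ∈ M) :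
    2 * τ * ⟪y - x, ν⟫ ≤ ‖y - x‖ ^ 2 := by
  have hball : τ ≤ infDist (x + τ • ν) M := by
    have hclosed : IsClosed {ρ : ℝ | ρ ≤ infDist (x + ρ • ν) M} :=
      isClosed_le continuous_id ((continuous_infDist_pt M).comp (by fun_prop))
    refine hclosed.closure_subset_iff.2 (fun ρ hρ => ?_)
      (by rw [closure_Ico hτ.ne]; exact right_mem_Icc.2 hτ.le)
    exact le_infDist_add_smul_of_lt hM hreach hx hν hnormal hρ.1 hρ.2
  have hdist : τ ≤ ‖(y - x) - τ • ν‖ := by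
    rw [sub_sub, ← dist_eq_norm, dist_comm]
    exact hball.trans (infDist_le_dist_of_mem hy)
  have := pow_le_pow_left₀ hτ.le hdist 2
  rw [norm_sub_sq_real, real_inner_smul_right, norm_smul_of_norm_eq_one hν hτ.le] at this
  linarith

lemma two_mul_inner_le_norm_mul_sq_norm (hM : IsClosed M) {τ : ℝ} (hτ : 0 < τ)
    (hreach : ∀ z, infDist z M < τ → ∃! p, p ∈ M ∧ dist z p = infDist z M) {x ν y : E}
    (hx : x ∈ M) (hnormal : ∀ v ∈ tangentConeAt ℝ M x, ⟪v, ν⟫ ≤ 0) (hy : y ∈ M) :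
    2 * τ * ⟪y - x, ν⟫ ≤ ‖ν‖ * ‖y - x‖ ^ 2 := by
  rcases eq_or_ne ν 0 with rfl | hν
  · simp
  have hνpos : 0 < ‖ν‖ := norm_pos_iff.2 hν
  have hunit := two_mul_inner_le_sq_norm_of_norm_eq_one hM hτ hreach hx (norm_smul_inv_norm hν)
    (fun v hv => by
      rw [real_inner_smul_right]
      exact mul_nonpos_of_nonneg_of_nonpos (by positivity) (hnormal v hv)) hy
  rw [real_inner_smul_right] at hunit
  calc 2 * τ * ⟪y - x, ν⟫ = ‖ν‖ * (2 * τ * ((‖ν‖ : ℝ)⁻¹ * ⟪y - x, ν⟫)) := by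
        field_simp
    _ ≤ ‖ν‖ * ‖y - x‖ ^ 2 := mul_le_mul_of_nonneg_left hunit hνpos.le

-- The submanifold structure at `x` is encoded by the tangent cone of `M` at `x` being the
-- linear subspace `T`.
theorem federer_tangent_bound_general {n : ℕ} (M : Set (EuclideanSpace ℝ (Fin n)))
    (τ : ℝ) (hτ : 0 < τ) (hM : IsClosed M)
    (hreach : HasReachGE M τ)
    (x : EuclideanSpace ℝ (Fin n)) (hx : x ∈ M)
    (T : Submodule ℝ (EuclideanSpace ℝ (Fin n)))
    (hT : tangentConeAt ℝ M x = (T : Set (EuclideanSpace ℝ (Fin n))))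
    (y : EuclideanSpace ℝ (Fin n)) (hy : y ∈ M) :
    Metric.infDist y ((fun v => x + v) '' (T : Set (EuclideanSpace ℝ (Fin n))))
      ≤ ‖y - x‖ ^ 2 / (2 * τ) := by
  set u := (y - x) - T.starProjection (y - x)
  have huT : ∀ v ∈ T, ⟪v, u⟫ = 0 :=
    (Submodule.mem_orthogonal T u).1 (T.sub_starProjection_mem_orthogonal (y - x))
  have hdist : infDist y ((fun v => x + v) '' (T : Set _)) ≤ ‖u‖ :=
    (infDist_le_dist_of_mem (mem_image_of_mem _ (T.starProjection_apply_mem _))).trans_eq <| by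
      rw [dist_eq_norm, sub_add_eq_sub_sub]
  have hinner : ⟪y - x, u⟫ = ‖u‖ ^ 2 := by
    conv_lhs => rw [← sub_add_cancel (y - x) (T.starProjection (y - x))]
    rw [inner_add_left, huT _ (T.starProjection_apply_mem _), add_zero,
      ← real_inner_self_eq_norm_sq]
  have hfed := two_mul_inner_le_norm_mul_sq_norm hM hτ hreach hx
    (fun v hv => (huT v (by rwa [hT] at hv)).le) hy
  rw [hinner] at hfed
  refine hdist.trans ?_
  rw [le_div_iff₀ (by positivity)]
  rcases (norm_nonneg u).eq_or_lt with hu | hu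
  · rw [← hu, zero_mul]; positivity
  · nlinarith

/-- **Federer's tangent bound for sets of positive reach.**
Let `M ⊂ ℝⁿ` be a `C²` submanifold with positive reach `τ > 0` and `x ∈ M`; we encode the
submanifold structure at `x` by requiring the tangent cone of `M` at `x` to be a linear
subspace `T` (the tangent space `T_x M`).  Then every `y ∈ M` with `‖y - x‖ < τ` satisfies
`d(y, x + T) ≤ ‖y - x‖² / (2τ)`, where `x + T` is the affine tangent plane at `x`. -/
theorem federer_tangent_bound {n : ℕ} (M : Set (EuclideanSpace ℝ (Fin n)))
    (τ : ℝ) (hτ : 0 < τ) (hM : IsClosed M)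
    (hreach : HasReachGE M τ)
    (x : EuclideanSpace ℝ (Fin n)) (hx : x ∈ M)
    (T : Submodule ℝ (EuclideanSpace ℝ (Fin n)))
    (hT : tangentConeAt ℝ M x = (T : Set (EuclideanSpace ℝ (Fin n))))
    (y : EuclideanSpace ℝ (Fin n)) (hy : y ∈ M) (hclose : ‖y - x‖ < τ) :
    Metric.infDist y ((fun v => x + v) '' (T : Set (EuclideanSpace ℝ (Fin n))))
      ≤ ‖y - x‖ ^ 2 / (2 * τ) :=
  federer_tangent_bound_general M τ hτ hM hreach x hx T hT y hy
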